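/- arXiv:1304.7397 — 4 statements merged into one kernel-verified Lean document; each statement's English description precedes it below -/
import Mathlib

section
/- For a connected fatgraph (combinatorial map) with v vertices, e edges, and r boundary components (faces), the genus g defined by 2 - 2g = v - e + r is a non-negative integer. -/
/-!
Write `c π` for the number of cycles of a permutation `π` of the `n` half-edges. As
`sign π = (-1) ^ (n + c π)`, the number `v + e + r + n` is even, and since `n = 2e` so is
`v - e + r`.

It remains to show `v + e + r ≤ n + 2`, the one-orbit case of
`c σ + c τ + c (τσ) ≤ n + 2 · #orbits ⟨σ, τ⟩`. Multiplying a permutation by a transposition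
`(x y)` changes its cycle count by exactly one (by at most one by counting orbits, not by zero by
the sign), downwards iff `x` and `y` lie in different cycles. Induct on `σ = σ' (x σx)`, where
`σ'` fixes `σx`, so that `c σ = c σ' - 1`. If `(x σx)` joins two orbits of `⟨σ', τ⟩`, it also
joins two cycles of `τσ'`, and the left side drops by two while the right side drops by at most
two; otherwise `⟨σ, τ⟩` has at least as many orbits as `⟨σ', τ⟩` and the left side does not grow.
-/

/-- The number of cycles (orbits, including fixed points) of a permutation. -/
def cycleCount {H : Type*} [Fintype H] [DecidableEq H] (σ : Equiv.Perm H) : ℕ :=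
  (Fintype.card H - σ.support.card) + σ.cycleType.card

open Equiv Equiv.Perm MulAction Subgroup

theorem Subgroup.mem_zpowers_mul_sup_zpowers {G : Type*} [Group G] (g h : G) :
    g ∈ zpowers (g * h) ⊔ zpowers h := by
  simpa using
    mul_mem (mem_sup_left (mem_zpowers (g * h))) (mem_sup_right (inv_mem (mem_zpowers h)))

namespace Equiv.Perm

section Orbits

variable {α β : Type*}

theorem orbitRel_iff {G : Subgroup (Perm α)} {a b : α} :
    orbitRel G α a b ↔ ∃ g ∈ G, g b = a := by
  simp [orbitRel_apply, mem_orbit_iff]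

theorem orbitRel_mono {G K : Subgroup (Perm α)} (h : G ≤ K) : orbitRel G α ≤ orbitRel K α :=
  fun _ _ hab => by
    obtain ⟨g, hg, rfl⟩ := orbitRel_iff.1 hab
    exact orbitRel_iff.2 ⟨g, h hg, rfl⟩

theorem orbitRel_zpowers (π : Perm α) : orbitRel (zpowers π) α = SameCycle.setoid π := by
  ext a b
  simp only [orbitRel_iff, mem_zpowers_iff, exists_exists_eq_and]
  exact sameCycle_comm

theorem orbitRel_zpowers_iff {π : Perm α} {a b : α} :
    orbitRel (zpowers π) α a b ↔ π.SameCycle a b := by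
  rw [orbitRel_zpowers]; rfl

theorem orbitRel_of_sameCycle {G : Subgroup (Perm α)} {π : Perm α} (hπ : π ∈ G) {a b : α}
    (h : π.SameCycle a b) : orbitRel G α a b :=
  orbitRel_mono (zpowers_le.2 hπ) (orbitRel_zpowers_iff.2 h)

noncomputable def numOrbits (G : Subgroup (Perm α)) : ℕ := Nat.card (orbitRel.Quotient G α)

theorem numOrbits_anti [Finite α] {G K : Subgroup (Perm α)} (h : G ≤ K) :
    numOrbits K ≤ numOrbits G :=
  Nat.card_le_card_of_surjective (Setoid.map_of_le (orbitRel_mono h)) fun a =>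
    Quotient.inductionOn a fun z => ⟨Quotient.mk _ z, rfl⟩

theorem numOrbits_le_one [Finite α] {G : Subgroup (Perm α)} (h : ∀ x y, ∃ g ∈ G, g x = y) :
    numOrbits G ≤ 1 :=
  Finite.card_le_one_iff_subsingleton.2
    ⟨fun a b => Quotient.inductionOn₂ a b fun x y => Quotient.sound (orbitRel_iff.2 (h y x))⟩

def invariantSubgroup (f : α → β) : Subgroup (Perm α) where
  carrier := {g | f ∘ g = f}
  mul_mem' {g h} (hg : f ∘ g = f) (hh : f ∘ h = f) := by
    change f ∘ g ∘ h = f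
    rw [← Function.comp_assoc, hg, hh]
  one_mem' := rfl
  inv_mem' {g} (hg : f ∘ g = f) := by
    change f ∘ g.symm = f
    rw [← hg, Function.comp_assoc, g.self_comp_symm, Function.comp_id, hg]

variable [DecidableEq α]

theorem swap_mem_invariantSubgroup {f : α → β} {x y : α} (h : f x = f y) :
    swap x y ∈ invariantSubgroup f := by
  funext z
  simp only [Function.comp_apply, swap_apply_def]
  split_ifs with hx hy
  · rw [hx, h]
  · rw [hy, h]
  · rfl

theorem apply_eq_of_orbitRel_sup_zpowers_swap {G : Subgroup (Perm α)} {f : α → β} {x y : α}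
    (hG : ∀ g ∈ G, ∀ z, f (g z) = f z) (hxy : f x = f y) {z w : α}
    (h : orbitRel ↥(G ⊔ zpowers (swap x y)) α z w) : f z = f w := by
  obtain ⟨g, hg, rfl⟩ := orbitRel_iff.1 h
  have hle : G ⊔ zpowers (swap x y) ≤ invariantSubgroup f :=
    sup_le (fun g hg => funext (hG g hg)) (zpowers_le.2 (swap_mem_invariantSubgroup hxy))
  exact congrFun (hle hg) w

theorem orbitRel_sup_zpowers_swap_of_orbitRel {G : Subgroup (Perm α)} {x y : α}
    (hxy : orbitRel G α x y) : orbitRel ↥(G ⊔ zpowers (swap x y)) α = orbitRel G α := by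
  refine le_antisymm (fun z w h => Quotient.exact ?_) (orbitRel_mono le_sup_left)
  refine apply_eq_of_orbitRel_sup_zpowers_swap (fun g hg u => ?_) (Quotient.sound hxy) h
  exact Quotient.sound (orbitRel_iff.2 ⟨g, hg, rfl⟩)

theorem numOrbits_sup_zpowers_swap_of_orbitRel {G : Subgroup (Perm α)} {x y : α}
    (hxy : orbitRel G α x y) : numOrbits (G ⊔ zpowers (swap x y)) = numOrbits G := by
  unfold numOrbits orbitRel.Quotient
  rw [orbitRel_sup_zpowers_swap_of_orbitRel hxy]

theorem numOrbits_sup_zpowers_swap_of_not_orbitRel [Finite α] {G : Subgroup (Perm α)} {x y : α}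
    (hxy : ¬ orbitRel G α x y) : numOrbits (G ⊔ zpowers (swap x y)) + 1 = numOrbits G := by
  classical
  set K := G ⊔ zpowers (swap x y)
  let q : α → orbitRel.Quotient G α := Quotient.mk _
  let p := Setoid.map_of_le (orbitRel_mono (le_sup_left : G ≤ K))
  have hq : ∀ g ∈ G, ∀ z, q (g z) = q z := fun g hg z =>
    Quotient.sound (orbitRel_iff.2 ⟨g, hg, rfl⟩)
  have hxyK : orbitRel K α x y :=
    orbitRel_iff.2 ⟨swap x y, mem_sup_right (mem_zpowers _), swap_apply_right x y⟩
  have hp : Function.Bijective fun a : {a // a ≠ q y} => p a := by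
    constructor
    · rintro ⟨a, ha⟩ ⟨b, hb⟩ hab
      induction a using Quotient.inductionOn with | h z => ?_
      induction b using Quotient.inductionOn with | h w => ?_
      change q z ≠ q y at ha
      change q w ≠ q y at hb
      -- `f` merges the `G`-orbit of `y` into that of `x`, so it is `K`-invariant.
      let f u := if q u = q y then q x else q u
      have hf : f z = f w := by
        refine apply_eq_of_orbitRel_sup_zpowers_swap (fun g hg u => ?_) ?_ (Quotient.exact hab)
        · simp only [f, hq g hg]
        · simp only [f]; split_ifs <;> rfl
      simp only [f, if_neg ha, if_neg hb] at hf
      exact Subtype.ext hf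
    · intro c
      induction c using Quotient.inductionOn with | h z => ?_
      by_cases hz : q z = q y
      · refine ⟨⟨q x, fun h => hxy (Quotient.exact h)⟩, Quotient.sound ?_⟩
        exact (orbitRel K α).trans hxyK (orbitRel_mono le_sup_left (Quotient.exact hz.symm))
      · exact ⟨⟨q z, hz⟩, rfl⟩
  unfold numOrbits
  rw [← Nat.card_congr (Equiv.ofBijective _ hp), ← Finite.card_option,
    Nat.card_congr (optionSubtypeNe (q y))]

theorem numOrbits_le_sup_zpowers_swap_add_one [Finite α] (G : Subgroup (Perm α)) (x y : α) :
    numOrbits G ≤ numOrbits (G ⊔ zpowers (swap x y)) + 1 := by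
  by_cases hxy : orbitRel G α x y
  · rw [numOrbits_sup_zpowers_swap_of_orbitRel hxy]
    exact Nat.le_succ _
  · rw [numOrbits_sup_zpowers_swap_of_not_orbitRel hxy]

end Orbits

section Cycles

variable {α : Type*} [Fintype α] [DecidableEq α]

theorem cycleFactorsFinset_eq_image_cycleOf (π : Perm α) :
    π.cycleFactorsFinset = π.support.image π.cycleOf := by
  ext c
  simp only [Finset.mem_image]
  constructor
  · intro hc
    obtain ⟨z, hz⟩ := (mem_cycleFactorsFinset_iff.1 hc).1.nonempty_support
    exact ⟨z, mem_cycleFactorsFinset_support_le hc hz, (cycle_is_cycleOf hz hc).symm⟩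
  · rintro ⟨z, hz, rfl⟩
    exact cycleOf_mem_cycleFactorsFinset_iff.2 hz

theorem card_quotient_sameCycle (π : Perm α) :
    Nat.card (Quotient (SameCycle.setoid π)) = cycleCount π := by
  classical
  let q := Quotient.mk (SameCycle.setoid π)
  have hfixed : (π.supportᶜ.image q).card = Fintype.card α - π.support.card := by
    rw [Finset.card_image_of_injOn, Finset.card_compl]
    intro z hz w _ hzw
    exact (Quotient.exact hzw).eq_of_left (notMem_support.1 (Finset.mem_compl.1 hz))
  have hmoved : (π.support.image q).card = π.cycleType.card := by
    let c : Quotient (SameCycle.setoid π) → Perm α :=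
      Quotient.lift π.cycleOf fun _ _ h => h.cycleOf_eq
    have : π.support.image π.cycleOf = (π.support.image q).image c := by
      rw [Finset.image_image]; rfl
    rw [cycleType_def, Multiset.card_map, ← Finset.card_def, cycleFactorsFinset_eq_image_cycleOf,
      this, Finset.card_image_of_injOn (s := π.support.image q)]
    rintro _ ha _ hb hab
    obtain ⟨z, hz, rfl⟩ := Finset.mem_image.1 ha
    obtain ⟨w, hw, rfl⟩ := Finset.mem_image.1 hb
    exact Quotient.sound ((sameCycle_iff_cycleOf_eq_of_mem_support hz hw).2 hab)
  have hdisj : _root_.Disjoint (π.support.image q) (π.supportᶜ.image q) := by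
    rw [Finset.disjoint_left]
    rintro _ ha hb
    obtain ⟨z, hz, rfl⟩ := Finset.mem_image.1 ha
    obtain ⟨w, hw, hwz⟩ := Finset.mem_image.1 hb
    exact Finset.mem_compl.1 hw ((Quotient.exact hwz).mem_support_iff.2 hz)
  rw [cycleCount, ← hfixed, ← hmoved, add_comm, ← Finset.card_union_of_disjoint hdisj,
    ← Finset.image_union, Finset.union_compl,
    Finset.image_univ_of_surjective Quotient.mk_surjective, Finset.card_univ,
    Nat.card_eq_fintype_card]

theorem cycleCount_eq_numOrbits_zpowers (π : Perm α) :
    cycleCount π = numOrbits (zpowers π) := by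
  rw [← card_quotient_sameCycle, numOrbits, orbitRel.Quotient, orbitRel_zpowers]

theorem cycleCount_one : cycleCount (1 : Perm α) = Fintype.card α := by
  simp [cycleCount]

theorem neg_one_pow_cycleCount (π : Perm α) :
    (-1 : ℤˣ) ^ cycleCount π = sign π * (-1) ^ Fintype.card α := by
  obtain ⟨k, hk⟩ := Nat.exists_eq_add_of_le' π.support.card_le_univ
  rw [cycleCount, sign_of_cycleType, sum_cycleType, hk, Nat.add_sub_cancel, ← pow_add,
    show π.support.card + π.cycleType.card + (k + π.support.card) =
      k + π.cycleType.card + 2 * π.support.card by ring, pow_add _ _ (2 * _), pow_mul, neg_one_sq,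
    one_pow, mul_one]

theorem cycleCount_mul_swap_ne (π : Perm α) {x y : α} (hxy : x ≠ y) :
    cycleCount (π * swap x y) ≠ cycleCount π := by
  intro h
  have := neg_one_pow_cycleCount (π * swap x y)
  rw [h, sign_mul, sign_swap hxy, neg_one_pow_cycleCount] at this
  simp at this

theorem even_cycleCount_add_cycleCount_add_cycleCount_mul_add_card (σ τ : Perm α) :
    Even (cycleCount σ + cycleCount τ + cycleCount (τ * σ) + Fintype.card α) := by
  rw [← neg_one_pow_eq_one_iff_even (by decide : (-1 : ℤˣ) ≠ 1), pow_add, pow_add, pow_add,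
    neg_one_pow_cycleCount, neg_one_pow_cycleCount, neg_one_pow_cycleCount, sign_mul]
  generalize sign σ = s; generalize sign τ = t; generalize (-1 : ℤˣ) ^ Fintype.card α = u
  calc s * u * (t * u) * (t * s * u) * u = (s * s) * (t * t) * (u * u) * (u * u) := by ac_rfl
    _ = 1 := by simp [Int.units_mul_self]

theorem two_mul_cycleCount_eq_card {a : Perm α} (hinv : a * a = 1) (hfpf : ∀ x, a x ≠ x) :
    2 * cycleCount a = Fintype.card α := by
  have hsupp : a.support = Finset.univ := by
    ext x
    simp [hfpf x]
  have hct : a.cycleType = Multiset.replicate a.cycleType.card 2 :=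
    cycleType_of_pow_prime_eq_one (by rw [sq, hinv])
  have hsum := sum_cycleType a
  rw [hct, Multiset.sum_replicate, hsupp, Finset.card_univ, smul_eq_mul] at hsum
  rw [cycleCount, hsupp, Finset.card_univ, Nat.sub_self, zero_add, ← hsum, mul_comm]

theorem cycleCount_mul_swap_le (π : Perm α) (x y : α) :
    cycleCount (π * swap x y) ≤ cycleCount π + 1 := by
  rw [cycleCount_eq_numOrbits_zpowers, cycleCount_eq_numOrbits_zpowers]
  calc numOrbits (zpowers (π * swap x y))
      ≤ numOrbits (zpowers (π * swap x y) ⊔ zpowers (swap x y)) + 1 :=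
        numOrbits_le_sup_zpowers_swap_add_one _ x y
    _ ≤ numOrbits (zpowers π) + 1 :=
        Nat.add_le_add_right (numOrbits_anti (zpowers_le.2 (mem_zpowers_mul_sup_zpowers _ _))) 1

theorem cycleCount_lt_mul_swap_of_sameCycle {π : Perm α} {x y : α} (hxy : x ≠ y)
    (h : π.SameCycle x y) : cycleCount π < cycleCount (π * swap x y) := by
  refine lt_of_le_of_ne ?_ (cycleCount_mul_swap_ne π hxy).symm
  rw [cycleCount_eq_numOrbits_zpowers, cycleCount_eq_numOrbits_zpowers,
    ← numOrbits_sup_zpowers_swap_of_orbitRel (orbitRel_zpowers_iff.2 h)]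
  exact numOrbits_anti (zpowers_le.2 (mul_mem (mem_sup_left (mem_zpowers π))
    (mem_sup_right (mem_zpowers (swap x y)))))

theorem cycleCount_mul_swap_lt_of_not_sameCycle {π : Perm α} {x y : α}
    (h : ¬ π.SameCycle x y) : cycleCount (π * swap x y) < cycleCount π := by
  have hxy : x ≠ y := fun hxy => h (hxy ▸ SameCycle.refl π x)
  refine lt_of_le_of_ne ?_ (cycleCount_mul_swap_ne π hxy)
  rw [cycleCount_eq_numOrbits_zpowers, cycleCount_eq_numOrbits_zpowers,
    ← numOrbits_sup_zpowers_swap_of_not_orbitRel (mt orbitRel_zpowers_iff.1 h)]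
  calc numOrbits (zpowers (π * swap x y))
      ≤ numOrbits (zpowers (π * swap x y) ⊔ zpowers (swap x y)) + 1 :=
        numOrbits_le_sup_zpowers_swap_add_one _ x y
    _ ≤ numOrbits (zpowers π ⊔ zpowers (swap x y)) + 1 :=
        Nat.add_le_add_right (numOrbits_anti (sup_le (zpowers_le.2
          (mem_zpowers_mul_sup_zpowers _ _)) le_sup_right)) 1

theorem cycleCount_add_cycleCount_add_cycleCount_mul_le (σ τ : Perm α) :
    cycleCount σ + cycleCount τ + cycleCount (τ * σ) ≤
      Fintype.card α + 2 * numOrbits (zpowers σ ⊔ zpowers τ) := by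
  induction hn : σ.support.card using Nat.strong_induction_on generalizing σ with
  | _ n ih =>
  obtain rfl | ⟨x, hx⟩ : σ = 1 ∨ ∃ x, σ x ≠ x := by
    by_contra! h
    exact h.1 (Equiv.ext h.2)
  · rw [cycleCount_one, mul_one, zpowers_one_eq_bot, bot_sup_eq, cycleCount_eq_numOrbits_zpowers]
    omega
  set y := σ x
  set σ' := σ * swap x y
  have hσ' : cycleCount σ < cycleCount σ' :=
    cycleCount_lt_mul_swap_of_sameCycle (Ne.symm hx) (sameCycle_apply_right.2 (SameCycle.refl σ x))
  have hsupp : σ'.support.card < n := by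
    rw [← hn, show σ' = swap y (σ y) * σ from mul_swap_eq_swap_mul σ x y]
    exact card_support_swap_mul fun h => hx (σ.injective h)
  have hσ'_bound := ih _ hsupp σ' rfl
  have hτσ : τ * σ = τ * σ' * swap x y := by simp [σ', mul_assoc]
  have hle : zpowers σ ⊔ zpowers τ ≤ zpowers σ' ⊔ zpowers τ ⊔ zpowers (swap x y) :=
    sup_le (zpowers_le.2 (sup_le_sup_right (le_sup_left : zpowers σ' ≤ _ ⊔ zpowers τ) _
      (mem_zpowers_mul_sup_zpowers σ _)))
      (le_sup_right.trans le_sup_left)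
  by_cases hrel : orbitRel ↥(zpowers σ' ⊔ zpowers τ) α x y
  · have horb := numOrbits_anti hle
    rw [numOrbits_sup_zpowers_swap_of_orbitRel hrel] at horb
    have hτσ_le := cycleCount_mul_swap_le (τ * σ') x y
    rw [← hτσ] at hτσ_le
    omega
  · have horb := (numOrbits_le_sup_zpowers_swap_add_one (zpowers σ' ⊔ zpowers τ) x y).trans
      (Nat.add_le_add_right (numOrbits_anti hle) 1)
    have hτσ_lt := cycleCount_mul_swap_lt_of_not_sameCycle fun h => hrel (orbitRel_of_sameCycle
      (mul_mem (mem_sup_right (mem_zpowers τ)) (mem_sup_left (mem_zpowers σ'))) h)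
    rw [← hτσ] at hτσ_lt
    omega

end Cycles

end Equiv.Perm

theorem fatgraph_genus_nonneg_integer_general
    {H : Type*} [Fintype H] [DecidableEq H]
    (σ a : Equiv.Perm H)
    (hinv : a * a = 1) (hfpf : ∀ x, a x ≠ x)
    (hconn : ∀ x y : H, ∃ w ∈ Subgroup.closure ({σ, a} : Set (Equiv.Perm H)), w x = y) :
    ∃ g : ℕ, (cycleCount σ : ℤ) - cycleCount a + cycleCount (a * σ) = 2 - 2 * g := by
  have hclosure : closure {σ, a} = zpowers σ ⊔ zpowers a := by
    rw [Set.insert_eq, Subgroup.closure_union, zpowers_eq_closure, zpowers_eq_closure]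
  have hconnected := numOrbits_le_one (hclosure ▸ hconn)
  have hbound := cycleCount_add_cycleCount_add_cycleCount_mul_le σ a
  have hedges := two_mul_cycleCount_eq_card hinv hfpf
  obtain ⟨m, hm⟩ := even_cycleCount_add_cycleCount_add_cycleCount_mul_add_card σ a
  exact ⟨Fintype.card H + 1 - m, by omega⟩

/-- For a connected fatgraph `(H, σ, a)` (with `σ` the vertex permutation and `a` a
fixed-point-free involution), setting `v`, `e`, `r` to be the numbers of cycles of `σ`,
orbits of `a`, and cycles of `a ∘ σ` respectively, the genus `g` determined by
`2 - 2g = v - e + r` is a non-negative integer. -/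
theorem fatgraph_genus_nonneg_integer
    {H : Type*} [Fintype H] [DecidableEq H] [Nonempty H]
    (σ a : Equiv.Perm H)
    (hinv : a * a = 1) (hfpf : ∀ x, a x ≠ x)
    (hconn : ∀ x y : H, ∃ w ∈ Subgroup.closure ({σ, a} : Set (Equiv.Perm H)), w x = y) :
    ∃ g : ℕ, (cycleCount σ : ℤ) - cycleCount a + cycleCount (a * σ) = 2 - 2 * g :=
  fatgraph_genus_nonneg_integer_general σ a hinv hfpf hconn
end

section
/- A unicellular map of genus 0 (a planar tree) has no trisections; equivalently, for a plane tree, following the boundary cycle γ, the first visit to each vertex is via its minimum half-edge and every down-step h has σ(h) equal to the minimum half-edge of its vertex. -/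
/-! Order the half-edges by their position along `γ`. The half-edge preceding the minimum of a
vertex is a down-step, so there are at least `v = n + 1` down-steps landing on vertex minima.
On the other hand, a down-step `h` other than the last half-edge satisfies
`α (γ h) = σ h ≤ h < γ h`, and exactly `n` half-edges `y` have `α y < y`; so there are at most
`n + 1` down-steps altogether. Hence every down-step lands on the minimum of its vertex. -/

open scoped Classical

/-- The position of `h` in the orbit of the root `r` under `γ`: the least `k` with
`γ^k r = h` (and `0` if `h` is not in the orbit).  This induces the linear order
`<_γ` on half-edges. -/
noncomputable def gpos {H : Type*} (γ : Equiv.Perm H) (r h : H) : ℕ :=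
  if hh : ∃ k, (γ ^ k) r = h then Nat.find hh else 0

/-- `m` is the minimum half-edge (w.r.t. `<_γ` rooted at `r`) of its `σ`-cycle. -/
def IsMinHE {H : Type*} (σ γ : Equiv.Perm H) (r m : H) : Prop :=
  ∀ y, σ.SameCycle m y → gpos γ r m ≤ gpos γ r y

/-- `h` is a trisection: a down-step (`σ h ≤_γ h`) such that `σ h` is not the minimum
half-edge of its vertex. -/
def IsTrisection {H : Type*} (σ γ : Equiv.Perm H) (r h : H) : Prop :=
  gpos γ r (σ h) ≤ gpos γ r h ∧ ¬ IsMinHE σ γ r (σ h)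

open Equiv Equiv.Perm Finset

section CycleMinima

variable {H : Type*} [Fintype H] [LinearOrder H]

def IsCycleMin (σ : Perm H) (x : H) : Prop :=
  ∀ y, σ.SameCycle x y → x ≤ y

lemma isCycleMin_min'_support {σ c : Perm H} (hc : c ∈ σ.cycleFactorsFinset) :
    IsCycleMin σ (c.support.min' (mem_cycleFactorsFinset_iff.mp hc).1.nonempty_support) := by
  set m := c.support.min' (mem_cycleFactorsFinset_iff.mp hc).1.nonempty_support
  have hmc : m ∈ c.support := min'_mem _ _
  intro y hy
  apply min'_le
  rw [cycle_is_cycleOf hmc hc, mem_support_cycleOf_iff]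
  exact ⟨hy, mem_cycleFactorsFinset_support_le hc hmc⟩

lemma cycleCount_le_card_isCycleMin (σ : Perm H) :
    cycleCount σ ≤ #{x | IsCycleMin σ x} := by
  have hfixed : #σ.supportᶜ ≤ #{x | IsCycleMin σ x ∧ x ∉ σ.support} := by
    refine card_le_card fun x hx => ?_
    rw [mem_compl, notMem_support] at hx
    simp only [mem_filter, mem_univ, true_and, notMem_support]
    exact ⟨fun y hy => (hy.eq_of_left hx).le, hx⟩
  have hcycles : #σ.cycleFactorsFinset ≤ #{x | IsCycleMin σ x ∧ x ∈ σ.support} := by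
    refine card_le_card_of_surjOn σ.cycleOf fun c hc => ?_
    have hmc := min'_mem c.support (mem_cycleFactorsFinset_iff.mp hc).1.nonempty_support
    refine ⟨_, ?_, (cycle_is_cycleOf hmc hc).symm⟩
    simp only [coe_filter, mem_univ, true_and, Set.mem_ofPred_eq]
    exact ⟨isCycleMin_min'_support hc, mem_cycleFactorsFinset_support_le hc hmc⟩
  have hsplit := card_filter_add_card_filter_not (s := {x | IsCycleMin σ x}) (· ∈ σ.support)
  rw [filter_filter, filter_filter] at hsplit
  rw [cycleCount, cycleType_def, Multiset.card_map, ← card_compl, ← hsplit, add_comm]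
  exact add_le_add hcycles hfixed

lemma Function.Involutive.two_mul_card_filter_apply_lt {β : Perm H}
    (hβ : Function.Involutive β) (hfix : ∀ x, β x ≠ x) :
    2 * #{y | β y < y} = Fintype.card H := by
  have hswap : #{y | β y < y} = #{y | ¬ β y < y} := by
    refine card_nbij' β β (fun y hy => ?_) (fun y hy => ?_) (fun y _ => hβ y) (fun y _ => hβ y)
    · simp only [coe_filter, mem_univ, true_and, Set.mem_ofPred_eq, not_lt, hβ y] at hy ⊢
      exact hy.le
    · simp only [coe_filter, mem_univ, true_and, Set.mem_ofPred_eq, not_lt, hβ y] at hy ⊢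
      exact hy.lt_of_ne (hfix y).symm
  rw [two_mul]
  nth_rw 2 [hswap]
  rw [card_filter_add_card_filter_not, card_univ]

end CycleMinima

lemma two_mul_card_filter_apply_le_self_le {N : ℕ} {β : Perm (Fin N)} (hβ : Function.Involutive β)
    (hfix : ∀ x, β x ≠ x) :
    2 * #{h | (β * finRotate N) h ≤ h} ≤ N + 2 := by
  rcases N.eq_zero_or_pos with rfl | hN
  · simp
  have : NeZero N := ⟨hN.ne'⟩
  set D : Finset (Fin N) := {h | (β * finRotate N) h ≤ h}
  have hshift : #(D.erase (-1)) ≤ #{y | β y < y} := by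
    refine card_le_card_of_injOn (finRotate N) (fun h hh => ?_) (finRotate N).injective.injOn
    rw [mem_coe, mem_erase, mem_filter] at hh
    rw [mem_coe, mem_filter]
    exact ⟨mem_univ _, hh.2.2.trans_lt ((lt_finRotate_iff_ne_neg_one h).mpr hh.1)⟩
  have hinvolution := hβ.two_mul_card_filter_apply_lt hfix
  have herase := pred_card_le_card_erase (s := D) (a := -1)
  rw [Fintype.card_fin] at hinvolution
  omega

lemma isCycleMin_apply_of_apply_le {N : ℕ} {β : Perm (Fin N)} (hβ : Function.Involutive β)
    (hfix : ∀ x, β x ≠ x) (hcount : N + 2 ≤ 2 * cycleCount (β * finRotate N)) {h : Fin N}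
    (hh : (β * finRotate N) h ≤ h) : IsCycleMin (β * finRotate N) ((β * finRotate N) h) := by
  set σ := β * finRotate N
  have hsub : ({h | IsCycleMin σ (σ h)} : Finset (Fin N)) ⊆ ({h | σ h ≤ h} : Finset (Fin N)) := by
    intro x hx
    rw [mem_filter] at hx ⊢
    exact ⟨mem_univ _, hx.2 x (sameCycle_apply_left.mpr (SameCycle.refl _ _))⟩
  have hcard : #{h | IsCycleMin σ (σ h)} = #{x | IsCycleMin σ x} :=
    card_nbij' σ σ.symm (fun x hx => by simpa using hx) (fun x hx => by simpa using hx)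
      (fun x _ => σ.symm_apply_apply x) (fun x _ => σ.apply_symm_apply x)
  have hlower := cycleCount_le_card_isCycleMin σ
  have hupper : 2 * #{h | σ h ≤ h} ≤ N + 2 := two_mul_card_filter_apply_le_self_le hβ hfix
  have heq := eq_of_subset_of_card_le hsub (by omega)
  have hmem : h ∈ ({h | σ h ≤ h} : Finset _) := by simp [hh]
  rw [← heq, mem_filter] at hmem
  exact hmem.2

open Fin.NatCast in
lemma finRotate_pow_apply_zero {N : ℕ} [NeZero N] (k : ℕ) : (finRotate N ^ k) 0 = (k : Fin N) := by
  induction k with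
  | zero => simp
  | succ k ih => rw [pow_succ', Perm.mul_apply, ih, finRotate_apply, Nat.cast_succ]

open Fin.NatCast in
lemma gpos_finRotate {N : ℕ} (hN : 0 < N) (h : Fin N) : gpos (finRotate N) ⟨0, hN⟩ h = h := by
  have : NeZero N := ⟨hN.ne'⟩
  have hk : ∀ k : ℕ, (finRotate N ^ k) ⟨0, hN⟩ = (k : Fin N) := finRotate_pow_apply_zero
  have hex : ∃ k, (finRotate N ^ k) ⟨0, hN⟩ = h := ⟨h, by rw [hk, Fin.cast_val_eq_self]⟩
  rw [gpos, dif_pos hex]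
  convert (Nat.find_eq_iff hex).mpr ⟨by rw [hk, Fin.cast_val_eq_self], fun k hkh heq => ?_⟩
  rw [hk, Fin.ext_iff, Fin.val_natCast, Nat.mod_eq_of_lt (hkh.trans h.isLt)] at heq
  omega

/-- Encoding as in Chapuy: a rooted unicellular map with `n` edges is a fixed-point-free
involution `α` on the `2n` half-edges, with boundary cycle `γ = finRotate (2n)` rooted at `0`
and vertex permutation `σ = α⁻¹ * γ`; genus `0` means the number of vertices is `n + 1`. -/
theorem planar_tree_no_trisections {n : ℕ} (hn : 0 < n)
    (α : Equiv.Perm (Fin (2 * n)))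
    (hinv : α * α = 1) (hfpf : ∀ x, α x ≠ x)
    (hg : cycleCount (α⁻¹ * finRotate (2 * n)) = n + 1) :
    (∀ h : Fin (2 * n),
        ¬ IsTrisection (α⁻¹ * finRotate (2 * n)) (finRotate (2 * n)) ⟨0, by omega⟩ h) ∧
    (∀ h : Fin (2 * n),
        gpos (finRotate (2 * n)) ⟨0, by omega⟩ ((α⁻¹ * finRotate (2 * n)) h) ≤
          gpos (finRotate (2 * n)) ⟨0, by omega⟩ h →
        IsMinHE (α⁻¹ * finRotate (2 * n)) (finRotate (2 * n)) ⟨0, by omega⟩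
          ((α⁻¹ * finRotate (2 * n)) h)) := by
  have hαinv : α⁻¹ = α := inv_eq_of_mul_eq_one_left hinv
  rw [hαinv] at hg ⊢
  have hdown : ∀ h, (α * finRotate (2 * n)) h ≤ h →
      IsCycleMin (α * finRotate (2 * n)) ((α * finRotate (2 * n)) h) := fun h =>
    isCycleMin_apply_of_apply_le (fun x => Perm.ext_iff.mp hinv x) hfpf (by omega)
  simp only [IsTrisection, IsMinHE, gpos_finRotate (show 0 < 2 * n by omega)]
  exact ⟨fun h htri => htri.2 (hdown h htri.1), hdown⟩
end

section
/- Gluing three distinct vertices of a unicellular map of genus g yields a unicellular map of genus g+1 with the same number of edges: if v₁, v₂, v₃ are distinct vertices with representative half-edges a₁ <_γ a₂ <_γ a₃ and vᵢ = (aᵢ, hᵢ¹, …, hᵢ^{mᵢ}), then replacing the three σ-cycles v₁, v₂, v₃ by the single cycle (a₁, h₂¹, …, h₂^{m₂}, a₂, h₃¹, …, h₃^{m₃}, a₃, h₁¹, …, h₁^{m₁}) produces a permutation σ' such that α∘σ' is still a single 2n-cycle, and the resulting map has genus g+1. -/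
open scoped Classical

set_option linter.unusedSectionVars false
set_option linter.unusedVariables false

namespace GlueAux

open Equiv Equiv.Perm

variable {H : Type*} [Fintype H] [DecidableEq H]

/-- The setoid of the same-cycle relation. -/
def scSetoid (f : Equiv.Perm H) : Setoid H :=
  ⟨f.SameCycle, ⟨fun x => Equiv.Perm.SameCycle.refl f x, fun h => h.symm, fun h1 h2 => h1.trans h2⟩⟩

theorem cycleCount_eq_card_quotient (f : Equiv.Perm H) :
    (Fintype.card H - f.support.card) + f.cycleType.card
      = Fintype.card (Quotient (scSetoid f)) := by
  have hfix : ∀ {x y : H}, f x = x → f.SameCycle x y → y = x := by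
    intro x y hx ⟨i, hi⟩
    rw [← hi, zpow_apply_eq_self_of_apply_eq_self hx]
  classical
  let e : Quotient (scSetoid f) ≃ ({x : H // f x = x} ⊕ {c // c ∈ f.cycleFactorsFinset}) :=
    { toFun := Quotient.lift
        (fun x => if hx : f x = x then Sum.inl ⟨x, hx⟩ else
          Sum.inr ⟨f.cycleOf x, by
            rw [cycleOf_mem_cycleFactorsFinset_iff]; exact mem_support.2 hx⟩)
        (by
          intro x y (hxy : f.SameCycle x y)
          by_cases hx : f x = x
          · have := hfix hx hxy; subst this; rfl
          · have hy : ¬ f y = y := by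
              intro hy
              have hxy' : x = y := hfix hy hxy.symm
              exact hx (hxy' ▸ hy)
            simp only [dif_neg hx, dif_neg hy]
            congr 1
            exact Subtype.ext hxy.cycleOf_eq)
      invFun := fun z => match z with
        | Sum.inl ⟨x, _⟩ => Quotient.mk (scSetoid f) x
        | Sum.inr ⟨c, hc⟩ => Quotient.mk (scSetoid f)
            ((mem_cycleFactorsFinset_iff.1 hc).1.nonempty_support.choose)
      left_inv := by
        refine Quotient.ind ?_
        intro x
        by_cases hx : f x = x
        · simp [hx]
        · simp only [Quotient.lift_mk, dif_neg hx]
          apply Quotient.sound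
          have hc : f.cycleOf x ∈ f.cycleFactorsFinset := by
            rw [cycleOf_mem_cycleFactorsFinset_iff]; exact mem_support.2 hx
          have hmem := (mem_cycleFactorsFinset_iff.1 hc).1.nonempty_support.choose_spec
          have h2 := (mem_support_cycleOf_iff' hx).1 hmem
          exact h2.symm
      right_inv := by
        rintro (⟨x, hx⟩ | ⟨c, hc⟩)
        · simp [hx]
        · have hne := (mem_cycleFactorsFinset_iff.1 hc).1.nonempty_support
          have hymem : hne.choose ∈ c.support := hne.choose_spec
          have hcy : c hne.choose = f hne.choose :=
            (Equiv.Perm.mem_cycleFactorsFinset_iff.1 hc).2 hne.choose hymem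
          have hyy : ¬ f hne.choose = hne.choose := by
            rw [← hcy]; exact mem_support.1 hymem
          simp only [Quotient.lift_mk, dif_neg hyy]
          congr 1
          exact Subtype.ext (cycle_is_cycleOf hymem hc).symm }
  rw [Fintype.card_congr e, Fintype.card_sum, Fintype.card_coe]
  congr 1
  · rw [Fintype.card_subtype]
    have : Finset.univ.filter (fun x => f x = x) = f.supportᶜ := by
      ext x; simp [Equiv.Perm.mem_support]
    rw [this, Finset.card_compl]
  · rw [cycleType_def, Multiset.card_map]
    rfl


theorem sameCycle_iff_nat (f : Equiv.Perm H) (x y : H) :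
    f.SameCycle x y ↔ ∃ k : ℕ, (f ^ k) x = y := by
  constructor
  · intro h
    obtain ⟨i, _, h⟩ := h.exists_pow_eq'
    exact ⟨i, h⟩
  · rintro ⟨k, h⟩
    exact ⟨(k : ℤ), by simpa using h⟩

/-- Walking with `f * τ` agrees with walking with `f` as long as we avoid the set
where `τ` acts. -/
theorem walk_pow (f τ : Equiv.Perm H) (A : Set H) (hτ : ∀ y, y ∉ A → τ y = y) :
    ∀ (j : ℕ) (x : H), (∀ i < j, (f ^ i) x ∉ A) → ((f * τ) ^ j) x = (f ^ j) x := by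
  intro j
  induction j with
  | zero => intro x _; rfl
  | succ j ih =>
    intro x h
    have h0 : x ∉ A := by simpa using h 0 (Nat.succ_pos j)
    rw [pow_succ, pow_succ, Equiv.Perm.mul_apply, Equiv.Perm.mul_apply, hτ x h0]
    exact ih (f x) (fun i hi => by
      have := h (i + 1) (by omega)
      rwa [pow_succ, Equiv.Perm.mul_apply] at this)

section Merge

variable {f : Equiv.Perm H} {a b : H}

theorem sameCycle_mul_swap_self (hab : ¬ f.SameCycle a b) :
    (f * Equiv.swap a b).SameCycle a b := by
  have hP : ∃ k, 0 < k ∧ (f ^ k) b = b :=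
    ⟨orderOf f, orderOf_pos f, by rw [pow_orderOf_eq_one]; rfl⟩
  set P := Nat.find hP with hPdef
  obtain ⟨hP0, hPb⟩ := Nat.find_spec hP
  have hmin : ∀ i, 0 < i → i < P → (f ^ i) b ≠ b := by
    intro i hi1 hi2 hib
    exact Nat.find_min hP hi2 ⟨hi1, hib⟩
  have hga : (f * Equiv.swap a b) a = f b := by
    simp [Equiv.Perm.mul_apply, Equiv.swap_apply_left]
  have hwalk : ((f * Equiv.swap a b) ^ (P - 1)) (f b) = (f ^ (P - 1)) (f b) := by
    apply walk_pow f (Equiv.swap a b) {a, b} (by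
      intro y hy
      simp only [Set.mem_insert_iff, Set.mem_singleton_iff, not_or] at hy
      exact Equiv.swap_apply_of_ne_of_ne hy.1 hy.2)
    intro i hi
    have hpow : (f ^ i) (f b) = (f ^ (i + 1)) b := by
      rw [pow_succ, Equiv.Perm.mul_apply]
    rw [hpow]
    simp only [Set.mem_insert_iff, Set.mem_singleton_iff, not_or]
    constructor
    · intro hia
      exact hab (((sameCycle_iff_nat f b a).2 ⟨i + 1, hia⟩).symm)
    · exact hmin (i + 1) (Nat.succ_pos i) (by omega)
  refine (sameCycle_iff_nat _ a b).2 ⟨P, ?_⟩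
  have : (f * Equiv.swap a b) ^ P = (f * Equiv.swap a b) ^ (P - 1) * (f * Equiv.swap a b) := by
    rw [← pow_succ]; congr 1; omega
  rw [this, Equiv.Perm.mul_apply, hga, hwalk]
  have : (f ^ (P - 1)) (f b) = (f ^ P) b := by
    rw [← Equiv.Perm.mul_apply, ← pow_succ]; congr 2; omega
  rw [this, hPb]

theorem sameCycle_mul_swap_step (hab : ¬ f.SameCycle a b) (z : H) :
    (f * Equiv.swap a b).SameCycle z (f z) := by
  by_cases hza : z = a
  · rw [hza]
    have h1 : (f * Equiv.swap a b).SameCycle b (f a) :=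
      ⟨1, by simp [Equiv.Perm.mul_apply, Equiv.swap_apply_right]⟩
    exact (sameCycle_mul_swap_self hab).trans h1
  by_cases hzb : z = b
  · rw [hzb]
    have h1 : (f * Equiv.swap a b).SameCycle a (f b) :=
      ⟨1, by simp [Equiv.Perm.mul_apply, Equiv.swap_apply_left]⟩
    exact (sameCycle_mul_swap_self hab).symm.trans h1
  · exact ⟨1, by simp [Equiv.Perm.mul_apply, Equiv.swap_apply_of_ne_of_ne hza hzb]⟩

theorem SameCycle.mul_swap_of_sameCycle (hab : ¬ f.SameCycle a b) {x y : H}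
    (h : f.SameCycle x y) : (f * Equiv.swap a b).SameCycle x y := by
  obtain ⟨k, rfl⟩ := (sameCycle_iff_nat f x y).1 h
  clear h
  induction k with
  | zero => exact Equiv.Perm.SameCycle.refl _ _
  | succ k ih =>
    have : (f ^ (k + 1)) x = f ((f ^ k) x) := by rw [pow_succ', Equiv.Perm.mul_apply]
    rw [this]
    exact ih.trans (sameCycle_mul_swap_step hab ((f ^ k) x))

/-- Characterization of the cycles of `f * swap a b` when `a b` lie in distinct cycles. -/
theorem sameCycle_mul_swap_cases (hab : ¬ f.SameCycle a b) {x y : H}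
    (h : (f * Equiv.swap a b).SameCycle x y) :
    f.SameCycle x y ∨
      ((f.SameCycle a x ∨ f.SameCycle b x) ∧ (f.SameCycle a y ∨ f.SameCycle b y)) := by
  set R : H → H → Prop := fun u v =>
    f.SameCycle u v ∨
      ((f.SameCycle a u ∨ f.SameCycle b u) ∧ (f.SameCycle a v ∨ f.SameCycle b v)) with hR
  have hstep : ∀ z, R z ((f * Equiv.swap a b) z) := by
    intro z
    by_cases hza : z = a
    · rw [hza]
      refine Or.inr ⟨Or.inl (Equiv.Perm.SameCycle.refl _ _), Or.inr ?_⟩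
      have : (f * Equiv.swap a b) a = f b := by
        simp [Equiv.Perm.mul_apply, Equiv.swap_apply_left]
      rw [this]; exact ⟨1, by simp⟩
    by_cases hzb : z = b
    · rw [hzb]
      refine Or.inr ⟨Or.inr (Equiv.Perm.SameCycle.refl _ _), Or.inl ?_⟩
      have : (f * Equiv.swap a b) b = f a := by
        simp [Equiv.Perm.mul_apply, Equiv.swap_apply_right]
      rw [this]; exact ⟨1, by simp⟩
    · have : (f * Equiv.swap a b) z = f z := by
        simp [Equiv.Perm.mul_apply, Equiv.swap_apply_of_ne_of_ne hza hzb]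
      rw [this]; exact Or.inl ⟨1, by simp⟩
  have htrans : ∀ u v w, R u v → R v w → R u w := by
    rintro u v w (huv | ⟨hu, hv⟩) (hvw | ⟨hv', hw⟩)
    · exact Or.inl (huv.trans hvw)
    · refine Or.inr ⟨?_, hw⟩
      rcases hv' with h | h
      · exact Or.inl (h.trans huv.symm)
      · exact Or.inr (h.trans huv.symm)
    · refine Or.inr ⟨hu, ?_⟩
      rcases hv with h | h
      · exact Or.inl (h.trans hvw)
      · exact Or.inr (h.trans hvw)
    · exact Or.inr ⟨hu, hw⟩
  obtain ⟨k, rfl⟩ := (sameCycle_iff_nat _ x y).1 h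
  clear h
  induction k with
  | zero => exact Or.inl (Equiv.Perm.SameCycle.refl _ _)
  | succ k ih =>
    have hrw : ((f * Equiv.swap a b) ^ (k + 1)) x
        = (f * Equiv.swap a b) (((f * Equiv.swap a b) ^ k) x) := by
      rw [pow_succ', Equiv.Perm.mul_apply]
    rw [hrw]
    exact htrans _ _ _ ih (hstep _)


theorem cycleCount_mul_swap_of_not_sameCycle (hab : ¬ f.SameCycle a b) :
    cycleCount f = cycleCount (f * Equiv.swap a b) + 1 := by
  classical
  set g := f * Equiv.swap a b with hgdef
  have hM1 : ∀ {x y : H}, f.SameCycle x y → g.SameCycle x y :=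
    fun h => SameCycle.mul_swap_of_sameCycle hab h
  have hM2 : g.SameCycle a b := sameCycle_mul_swap_self hab
  have hout : ∀ c : Quotient (scSetoid f), f.SameCycle c.out c.out ∧ True := fun c => ⟨.refl f _, trivial⟩
  -- the bijection between non-[b] classes of f and classes of g
  let φ : {c : Quotient (scSetoid f) // c ≠ Quotient.mk (scSetoid f) b} → Quotient (scSetoid g) :=
    fun c => Quotient.mk (scSetoid g) c.1.out
  have houtrel : ∀ (s : Setoid H) (x : H), s.r (Quotient.mk s x).out x := by
    intro s x
    exact Quotient.exact (Quotient.out_eq (Quotient.mk s x))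
  have hφbij : Function.Bijective φ := by
    constructor
    · rintro ⟨c₁, h₁⟩ ⟨c₂, h₂⟩ h
      have hgrel : g.SameCycle c₁.out c₂.out := Quotient.exact h
      have key : f.SameCycle c₁.out c₂.out := by
        rcases sameCycle_mul_swap_cases hab hgrel with h | ⟨hx, hy⟩
        · exact h
        · rcases hx with hx | hx
          · rcases hy with hy | hy
            · exact hx.symm.trans hy
            · exfalso
              apply h₂
              rw [← Quotient.out_eq c₂]
              exact Quotient.sound hy.symm
          · exfalso
            apply h₁
            rw [← Quotient.out_eq c₁]
            exact Quotient.sound hx.symm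
      apply Subtype.ext
      show c₁ = c₂
      rw [← Quotient.out_eq c₁, ← Quotient.out_eq c₂]
      exact Quotient.sound key
    · intro z
      by_cases hbw : f.SameCycle b z.out
      · refine ⟨⟨Quotient.mk (scSetoid f) a, ?_⟩, ?_⟩
        · intro h
          exact hab (Quotient.exact h)
        · refine Eq.trans (Quotient.sound ?_) (Quotient.out_eq z)
          have h1 := Quotient.exact (Quotient.out_eq (Quotient.mk (scSetoid f) a))
          exact (hM1 h1).trans (hM2.trans (hM1 hbw))
      · refine ⟨⟨Quotient.mk (scSetoid f) z.out, ?_⟩, ?_⟩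
        · intro h
          exact hbw (Quotient.exact h).symm
        · refine Eq.trans (Quotient.sound ?_) (Quotient.out_eq z)
          have h1 := Quotient.exact (Quotient.out_eq (Quotient.mk (scSetoid f) z.out))
          exact hM1 h1
  have hcard := Fintype.card_of_bijective hφbij
  have hsub : Fintype.card {c : Quotient (scSetoid f) // c ≠ Quotient.mk (scSetoid f) b}
      = Fintype.card (Quotient (scSetoid f)) - 1 := by
    have h1 : Fintype.card {c : Quotient (scSetoid f) // c = Quotient.mk (scSetoid f) b} = 1 :=
      Fintype.card_subtype_eq _
    have h2 := Fintype.card_subtype_compl (fun c : Quotient (scSetoid f) => c = Quotient.mk (scSetoid f) b)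
    rw [h1] at h2
    convert h2 using 2
  have hpos : 0 < Fintype.card (Quotient (scSetoid f)) :=
    Fintype.card_pos_iff.2 ⟨Quotient.mk (scSetoid f) b⟩
  show (Fintype.card H - f.support.card) + f.cycleType.card
      = ((Fintype.card H - g.support.card) + g.cycleType.card) + 1
  rw [cycleCount_eq_card_quotient, cycleCount_eq_card_quotient]
  omega


end Merge

end GlueAux

/-- Gluing three distinct vertices of a unicellular map of genus `g` yields a
unicellular map of genus `g + 1` with the same number of edges.  Here the unicellular
map is `(σ, α)` on the `2n` half-edges `Fin (2n)` with `γ = α * σ` a single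
`2n`-cycle rooted at `r`; the vertices `v₁, v₂, v₃` containing the representative
half-edges `a₁ <_γ a₂ <_γ a₃` are distinct `σ`-cycles, and gluing replaces them by
the single interleaved cycle, i.e. replaces `σ` by `σ' = σ ∘ (a₁ a₂ a₃)`. -/
theorem glue_three_vertices_increases_genus {n g : ℕ}
    (α σ : Equiv.Perm (Fin (2 * n)))
    (hinv : α * α = 1) (hfpf : ∀ x, α x ≠ x)
    (hcyc : (α * σ).IsCycle) (hsupp : (α * σ).support = Finset.univ)
    (r a₁ a₂ a₃ : Fin (2 * n))
    (hd12 : ¬ σ.SameCycle a₁ a₂) (hd13 : ¬ σ.SameCycle a₁ a₃)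
    (hd23 : ¬ σ.SameCycle a₂ a₃)
    (ho12 : gpos (α * σ) r a₁ < gpos (α * σ) r a₂)
    (ho23 : gpos (α * σ) r a₂ < gpos (α * σ) r a₃)
    (hg : cycleCount σ + 2 * g = n + 1) :
    (α * (σ * (Equiv.swap a₁ a₂ * Equiv.swap a₂ a₃))).IsCycle ∧
    (α * (σ * (Equiv.swap a₁ a₂ * Equiv.swap a₂ a₃))).support = Finset.univ ∧
    cycleCount (σ * (Equiv.swap a₁ a₂ * Equiv.swap a₂ a₃)) + 2 * (g + 1) = n + 1 := by
  classical
  set γ := α * σ with hγdef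
  set τ := Equiv.swap a₁ a₂ * Equiv.swap a₂ a₃ with hτdef
  have h12 : a₁ ≠ a₂ := fun h => hd12 (h ▸ Equiv.Perm.SameCycle.refl σ a₁)
  have h13 : a₁ ≠ a₃ := fun h => hd13 (h ▸ Equiv.Perm.SameCycle.refl σ a₁)
  have h23 : a₂ ≠ a₃ := fun h => hd23 (h ▸ Equiv.Perm.SameCycle.refl σ a₂)
  have h2n : 0 < 2 * n := r.pos
  have hmov : ∀ x : Fin (2 * n), γ x ≠ x := fun x =>
    Equiv.Perm.mem_support.1 (hsupp ▸ Finset.mem_univ x)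
  have hord : orderOf γ = 2 * n := by
    rw [hcyc.orderOf, hsupp, Finset.card_univ, Fintype.card_fin]
  have hex : ∀ x, ∃ k : ℕ, (γ ^ k) r = x := fun x => hcyc.exists_pow_eq (hmov r) (hmov x)
  have hspec : ∀ x, (γ ^ (gpos γ r x)) r = x := by
    intro x
    unfold gpos
    rw [dif_pos (hex x)]
    exact @Nat.find_spec (fun k => (γ ^ k) r = x) (fun a => Classical.propDecidable _) (hex x)
  have pm : ∀ s : ℕ, γ ^ (s % (2 * n)) = γ ^ s := by
    intro s
    have h : γ ^ (s % orderOf γ) = γ ^ s := pow_mod_orderOf γ s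
    rwa [hord] at h
  have hlt : ∀ x, gpos γ r x < 2 * n := by
    intro x
    have hk' : (γ ^ ((hex x).choose % (2 * n))) r = x := by
      rw [pm]
      exact (hex x).choose_spec
    have h1 : gpos γ r x ≤ (hex x).choose % (2 * n) := by
      unfold gpos
      rw [dif_pos (hex x)]
      exact @Nat.find_min' (fun k => (γ ^ k) r = x) (fun a => Classical.propDecidable _) (hex x) _ hk'
    have h2 := Nat.mod_lt (hex x).choose h2n
    omega
  have hinj : ∀ k l, k < 2 * n → l < 2 * n → (γ ^ k) r = (γ ^ l) r → k = l := by
    have base : ∀ k l, k ≤ l → l < 2 * n → (γ ^ k) r = (γ ^ l) r → k = l := by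
      intro k l h hl hkl
      have h1 : (γ ^ (l - k)) ((γ ^ k) r) = (γ ^ k) r := by
        rw [← Equiv.Perm.mul_apply, ← pow_add, Nat.sub_add_cancel h]
        exact hkl.symm
      have h2 : γ ^ (l - k) = 1 := (hcyc.pow_eq_one_iff' (hmov ((γ ^ k) r))).2 h1
      have h3 := orderOf_dvd_of_pow_eq_one h2
      rw [hord] at h3
      have h4 : l - k = 0 := Nat.eq_zero_of_dvd_of_lt h3 (by omega)
      omega
    intro k l hk hl hkl
    rcases le_total k l with h | h
    · exact base k l h hl hkl
    · exact (base l k h hk hkl.symm).symm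
  have heq : ∀ s t : ℕ, (γ ^ s) r = (γ ^ t) r → s % (2 * n) = t % (2 * n) := by
    intro s t h
    apply hinj _ _ (Nat.mod_lt _ h2n) (Nat.mod_lt _ h2n)
    rw [pm, pm]
    exact h
  set p₁ := gpos γ r a₁ with hp₁def
  set p₂ := gpos γ r a₂ with hp₂def
  set p₃ := gpos γ r a₃ with hp₃def
  have hp1 : (γ ^ p₁) r = a₁ := hspec a₁
  have hp2 : (γ ^ p₂) r = a₂ := hspec a₂
  have hp3 : (γ ^ p₃) r = a₃ := hspec a₃
  have hlt1 : p₁ < 2 * n := hlt a₁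
  have hlt2 : p₂ < 2 * n := hlt a₂
  have hlt3 : p₃ < 2 * n := hlt a₃
  -- values of τ
  have hτ1 : τ a₁ = a₂ := by
    rw [hτdef, Equiv.Perm.mul_apply, Equiv.swap_apply_of_ne_of_ne h12 h13,
      Equiv.swap_apply_left]
  have hτ2 : τ a₂ = a₃ := by
    rw [hτdef, Equiv.Perm.mul_apply, Equiv.swap_apply_left,
      Equiv.swap_apply_of_ne_of_ne h13.symm h23.symm]
  have hτ3 : τ a₃ = a₁ := by
    rw [hτdef, Equiv.Perm.mul_apply, Equiv.swap_apply_right, Equiv.swap_apply_right]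
  have hτo : ∀ y : Fin (2 * n), y ∉ ({a₁, a₂, a₃} : Set (Fin (2 * n))) → τ y = y := by
    intro y hy
    simp only [Set.mem_insert_iff, Set.mem_singleton_iff, not_or] at hy
    rw [hτdef, Equiv.Perm.mul_apply, Equiv.swap_apply_of_ne_of_ne hy.2.1 hy.2.2,
      Equiv.swap_apply_of_ne_of_ne hy.1 hy.2.1]
  have W := GlueAux.walk_pow γ τ ({a₁, a₂, a₃} : Set (Fin (2 * n))) hτo
  have notin : ∀ i, i < 2 * n → i ≠ p₁ → i ≠ p₂ → i ≠ p₃ →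
      (γ ^ i) r ∉ ({a₁, a₂, a₃} : Set (Fin (2 * n))) := by
    intro i hi hi1 hi2 hi3 hmem
    simp only [Set.mem_insert_iff, Set.mem_singleton_iff] at hmem
    rcases hmem with h | h | h
    · exact hi1 (hinj i p₁ hi hlt1 (h.trans hp1.symm))
    · exact hi2 (hinj i p₂ hi hlt2 (h.trans hp2.symm))
    · exact hi3 (hinj i p₃ hi hlt3 (h.trans hp3.symm))
  have cont : ∀ (m k j : ℕ), ((γ * τ) ^ m) r = (γ ^ k) r →
      (∀ i, i < j → (γ ^ (k + i)) r ∉ ({a₁, a₂, a₃} : Set (Fin (2 * n)))) →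
      ((γ * τ) ^ (m + j)) r = (γ ^ (k + j)) r := by
    intro m k j hmk hcond
    have h1 : ((γ * τ) ^ (m + j)) r = ((γ * τ) ^ j) (((γ * τ) ^ m) r) := by
      rw [add_comm, pow_add, Equiv.Perm.mul_apply]
    rw [h1, hmk, W j ((γ ^ k) r) ?_]
    · rw [← Equiv.Perm.mul_apply, ← pow_add, add_comm]
    · intro i hi
      have h2 : (γ ^ i) ((γ ^ k) r) = (γ ^ (k + i)) r := by
        rw [← Equiv.Perm.mul_apply, ← pow_add, add_comm]
      rw [h2]
      exact hcond i hi
  have Seg1 : ∀ k, k ≤ p₁ → ((γ * τ) ^ k) r = (γ ^ k) r := by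
    intro k hk
    exact W k r (fun i hi => notin i (by omega) (by omega) (by omega) (by omega))
  have E1 : ((γ * τ) ^ (p₁ + 1)) r = (γ ^ (p₂ + 1)) r := by
    calc ((γ * τ) ^ (p₁ + 1)) r = (γ * τ) (((γ * τ) ^ p₁) r) := by
          rw [pow_succ', Equiv.Perm.mul_apply]
      _ = γ (τ a₁) := by rw [Seg1 p₁ le_rfl, hp1, Equiv.Perm.mul_apply]
      _ = (γ ^ (p₂ + 1)) r := by
          rw [hτ1, ← hp2, pow_succ']
          exact (Equiv.Perm.mul_apply _ _ _).symm
  have Seg2 : ∀ j, p₂ + 1 + j ≤ p₃ → ((γ * τ) ^ (p₁ + 1 + j)) r = (γ ^ (p₂ + 1 + j)) r := by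
    intro j hj
    exact cont (p₁ + 1) (p₂ + 1) j E1
      (fun i hi => notin (p₂ + 1 + i) (by omega) (by omega) (by omega) (by omega))
  have E2 : ((γ * τ) ^ (p₁ + (p₃ - p₂))) r = a₃ := by
    have h := Seg2 (p₃ - p₂ - 1) (by omega)
    rw [show p₁ + 1 + (p₃ - p₂ - 1) = p₁ + (p₃ - p₂) from by omega,
      show p₂ + 1 + (p₃ - p₂ - 1) = p₃ from by omega] at h
    rw [h, hp3]
  have E3 : ((γ * τ) ^ (p₁ + (p₃ - p₂) + 1)) r = (γ ^ (p₁ + 1)) r := by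
    calc ((γ * τ) ^ (p₁ + (p₃ - p₂) + 1)) r = (γ * τ) (((γ * τ) ^ (p₁ + (p₃ - p₂))) r) := by
          rw [pow_succ', Equiv.Perm.mul_apply]
      _ = γ (τ a₃) := by rw [E2, Equiv.Perm.mul_apply]
      _ = (γ ^ (p₁ + 1)) r := by
          rw [hτ3, ← hp1, pow_succ']
          exact (Equiv.Perm.mul_apply _ _ _).symm
  have Seg3 : ∀ j, p₁ + 1 + j ≤ p₂ →
      ((γ * τ) ^ (p₁ + (p₃ - p₂) + 1 + j)) r = (γ ^ (p₁ + 1 + j)) r := by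
    intro j hj
    exact cont (p₁ + (p₃ - p₂) + 1) (p₁ + 1) j E3
      (fun i hi => notin (p₁ + 1 + i) (by omega) (by omega) (by omega) (by omega))
  have E4 : ((γ * τ) ^ p₃) r = a₂ := by
    have h := Seg3 (p₂ - p₁ - 1) (by omega)
    rw [show p₁ + (p₃ - p₂) + 1 + (p₂ - p₁ - 1) = p₃ from by omega,
      show p₁ + 1 + (p₂ - p₁ - 1) = p₂ from by omega] at h
    rw [h, hp2]
  have E5 : ((γ * τ) ^ (p₃ + 1)) r = (γ ^ (p₃ + 1)) r := by
    calc ((γ * τ) ^ (p₃ + 1)) r = (γ * τ) (((γ * τ) ^ p₃) r) := by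
          rw [pow_succ', Equiv.Perm.mul_apply]
      _ = γ (τ a₂) := by rw [E4, Equiv.Perm.mul_apply]
      _ = (γ ^ (p₃ + 1)) r := by
          rw [hτ2, ← hp3, pow_succ']
          exact (Equiv.Perm.mul_apply _ _ _).symm
  have Seg4 : ∀ j, p₃ + 1 + j < 2 * n → ((γ * τ) ^ (p₃ + 1 + j)) r = (γ ^ (p₃ + 1 + j)) r := by
    intro j hj
    exact cont (p₃ + 1) (p₃ + 1) j E5
      (fun i hi => notin (p₃ + 1 + i) (by omega) (by omega) (by omega) (by omega))
  have cover : ∀ k, k < 2 * n → ∃ m, ((γ * τ) ^ m) r = (γ ^ k) r := by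
    intro k hk
    rcases le_or_gt k p₁ with h | h
    · exact ⟨k, Seg1 k h⟩
    rcases le_or_gt k p₂ with h2 | h2
    · refine ⟨p₃ - p₂ + k, ?_⟩
      have hh := Seg3 (k - p₁ - 1) (by omega)
      rwa [show p₁ + (p₃ - p₂) + 1 + (k - p₁ - 1) = p₃ - p₂ + k from by omega,
        show p₁ + 1 + (k - p₁ - 1) = k from by omega] at hh
    rcases le_or_gt k p₃ with h3 | h3
    · refine ⟨p₁ + (k - p₂), ?_⟩
      have hh := Seg2 (k - p₂ - 1) (by omega)
      rwa [show p₁ + 1 + (k - p₂ - 1) = p₁ + (k - p₂) from by omega,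
        show p₂ + 1 + (k - p₂ - 1) = k from by omega] at hh
    · refine ⟨k, ?_⟩
      have hh := Seg4 (k - p₃ - 1) (by omega)
      rwa [show p₃ + 1 + (k - p₃ - 1) = k from by omega] at hh
  have hall : ∀ x, (γ * τ).SameCycle r x := by
    intro x
    obtain ⟨m, hm⟩ := cover (gpos γ r x) (hlt x)
    rw [hspec x] at hm
    exact ⟨(m : ℤ), by simpa using hm⟩
  have nofix : ∀ x, (γ * τ) x ≠ x := by
    intro x hx
    by_cases hx1 : x = a₁
    · rw [hx1, Equiv.Perm.mul_apply, hτ1] at hx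
      have h1 : (γ ^ (p₂ + 1)) r = (γ ^ p₁) r := by
        rw [pow_succ', Equiv.Perm.mul_apply, hp2, hp1]
        exact hx
      have hm := heq _ _ h1
      rw [Nat.mod_eq_of_lt hlt1] at hm
      rcases lt_or_eq_of_le (show p₂ + 1 ≤ 2 * n from by omega) with hc | hc
      · rw [Nat.mod_eq_of_lt hc] at hm; omega
      · rw [hc, Nat.mod_self] at hm; omega
    by_cases hx2 : x = a₂
    · rw [hx2, Equiv.Perm.mul_apply, hτ2] at hx
      have h1 : (γ ^ (p₃ + 1)) r = (γ ^ p₂) r := by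
        rw [pow_succ', Equiv.Perm.mul_apply, hp3, hp2]
        exact hx
      have hm := heq _ _ h1
      rw [Nat.mod_eq_of_lt hlt2] at hm
      rcases lt_or_eq_of_le (show p₃ + 1 ≤ 2 * n from by omega) with hc | hc
      · rw [Nat.mod_eq_of_lt hc] at hm; omega
      · rw [hc, Nat.mod_self] at hm; omega
    by_cases hx3 : x = a₃
    · rw [hx3, Equiv.Perm.mul_apply, hτ3] at hx
      have h1 : (γ ^ (p₁ + 1)) r = (γ ^ p₃) r := by
        rw [pow_succ', Equiv.Perm.mul_apply, hp1, hp3]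
        exact hx
      have hm := heq _ _ h1
      rw [Nat.mod_eq_of_lt hlt3, Nat.mod_eq_of_lt (show p₁ + 1 < 2 * n from by omega)] at hm
      omega
    · have hnm : x ∉ ({a₁, a₂, a₃} : Set (Fin (2 * n))) := by
        simp only [Set.mem_insert_iff, Set.mem_singleton_iff, not_or]
        exact ⟨hx1, hx2, hx3⟩
      rw [Equiv.Perm.mul_apply, hτo x hnm] at hx
      exact hmov x hx
  have hcyc' : (γ * τ).IsCycle := ⟨r, nofix r, fun y _ => hall y⟩
  have hsupp' : (γ * τ).support = Finset.univ :=
    Finset.eq_univ_iff_forall.2 (fun x => Equiv.Perm.mem_support.2 (nofix x))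
  have hassoc : α * (σ * τ) = γ * τ := (mul_assoc α σ τ).symm
  refine ⟨?_, ?_, ?_⟩
  · rw [hassoc]; exact hcyc'
  · rw [hassoc]; exact hsupp'
  · have c1 : cycleCount σ = cycleCount (σ * Equiv.swap a₁ a₂) + 1 :=
      GlueAux.cycleCount_mul_swap_of_not_sameCycle hd12
    have hn23 : ¬ (σ * Equiv.swap a₁ a₂).SameCycle a₂ a₃ := by
      intro h
      rcases GlueAux.sameCycle_mul_swap_cases hd12 h with h' | ⟨_, hy⟩
      · exact hd23 h'
      · rcases hy with hy | hy
        · exact hd13 hy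
        · exact hd23 hy
    have c2 : cycleCount (σ * Equiv.swap a₁ a₂)
        = cycleCount (σ * Equiv.swap a₁ a₂ * Equiv.swap a₂ a₃) + 1 :=
      GlueAux.cycleCount_mul_swap_of_not_sameCycle hn23
    have hassoc2 : σ * τ = σ * Equiv.swap a₁ a₂ * Equiv.swap a₂ a₃ := by
      rw [hτdef, mul_assoc]
    rw [hassoc2]
    omega
end

section
/- After gluing three vertices v₁, v₂, v₃ (with minimum half-edges a₁ <_γ a₂ <_γ a₃) of a unicellular map into a single vertex v̄ = (a₁, h₂¹,…,h₂^{m₂}, a₂, h₃¹,…,h₃^{m₃}, a₃, h₁¹,…,h₁^{m₁}), the half-edge σ̄⁻¹(a₃) is a trisection of the resulting unicellular map. -/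
open scoped Classical

/-!
Gluing replaces `σ` by `σ̄ = σ ∘ c` with `c = (a₁ a₂ a₃)`, so the boundary walk `γ̄ = γ ∘ c`
follows `γ` from the root up to `a₁`, then jumps to the segment `(a₂, a₃]`, then to `(a₁, a₂]`,
and after `a₂` continues as before: the glued tour is the old one with two adjacent segments
exchanged. Hence `a₁` keeps its position, `a₃` moves before `a₂`, and everything after `a₃`
keeps its position. Now `σ̄⁻¹ a₃` is either `a₂` or the `σ`-predecessor of `a₃`, which lies after
`a₃` by minimality of `a₃`; either way it comes after `a₃` in the glued tour, so it is a
down-step. And `a₃` is not minimal on its glued vertex, which also contains `a₁`.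
-/

open Equiv (Perm swap)

section FullCycle

variable {H : Type*} {γ : Perm H} {r : H}

theorem gpos_pow_apply_of_forall_ne {t : ℕ} (h : ∀ j < t, (γ ^ j) r ≠ (γ ^ t) r) :
    gpos γ r ((γ ^ t) r) = t := by
  have hex : ∃ k, (γ ^ k) r = (γ ^ t) r := ⟨t, rfl⟩
  rw [gpos, dif_pos hex]
  exact le_antisymm (Nat.find_le rfl) (not_lt.mp fun hlt => h _ hlt (Nat.find_spec hex))

variable [Fintype H] (hγ : γ.IsCycleOn (Finset.univ : Finset H))
include hγ

theorem Equiv.Perm.IsCycleOn.gpos_pow_apply {t : ℕ} (ht : t < Fintype.card H) :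
    gpos γ r ((γ ^ t) r) = t := by
  refine gpos_pow_apply_of_forall_ne fun j hj hjt => hj.ne ?_
  exact ((hγ.pow_apply_eq_pow_apply (Finset.mem_univ r)).mp hjt).eq_of_lt_of_lt
    (hj.trans ht) ht

theorem Equiv.Perm.IsCycleOn.exists_gpos_eq (x : H) :
    ∃ t < Fintype.card H, (γ ^ t) r = x ∧ gpos γ r x = t := by
  obtain ⟨t, ht, rfl⟩ := hγ.exists_pow_eq (Finset.mem_univ r) (Finset.mem_univ x)
  exact ⟨t, ht, rfl, hγ.gpos_pow_apply ht⟩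

theorem Equiv.Perm.IsCycleOn.gpos_lt_card (x : H) : gpos γ r x < Fintype.card H := by
  obtain ⟨t, ht, -, hx⟩ := hγ.exists_gpos_eq (r := r) x
  exact hx ▸ ht

theorem Equiv.Perm.IsCycleOn.gpos_injective : Function.Injective (gpos γ r) := by
  intro x y hxy
  obtain ⟨s, -, rfl, hs⟩ := hγ.exists_gpos_eq (r := r) x
  obtain ⟨t, -, rfl, ht⟩ := hγ.exists_gpos_eq (r := r) y
  rw [← hs, ← ht, hxy]

theorem Equiv.Perm.IsCycleOn.gpos_apply {x : H} (hx : gpos γ r x + 1 < Fintype.card H) :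
    gpos γ r (γ x) = gpos γ r x + 1 := by
  obtain ⟨t, -, rfl, ht⟩ := hγ.exists_gpos_eq (r := r) x
  rw [ht] at hx ⊢
  rw [← Equiv.Perm.mul_apply, ← pow_succ', hγ.gpos_pow_apply hx]

end FullCycle

/-- The position in the old tour of the half-edge at position `t` of the glued tour: the
adjacent segments `(q₁, q₂]` and `(q₂, q₃]` are exchanged. -/
def segmentSwap (q₁ q₂ q₃ t : ℕ) : ℕ :=
  if t ≤ q₁ then t
  else if t ≤ q₁ + (q₃ - q₂) then t - q₁ + q₂
  else if t ≤ q₃ then t - (q₃ - q₂)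
  else t

section SegmentSwap

variable {q₁ q₂ q₃ : ℕ}

theorem segmentSwap_zero : segmentSwap q₁ q₂ q₃ 0 = 0 := by
  simp [segmentSwap]

theorem segmentSwap_succ (h12 : q₁ < q₂) (h23 : q₂ < q₃) (t : ℕ) :
    segmentSwap q₁ q₂ q₃ (t + 1) =
      (swap q₁ q₂ * swap q₂ q₃) (segmentSwap q₁ q₂ q₃ t) + 1 := by
  simp only [segmentSwap, Equiv.Perm.mul_apply, Equiv.swap_apply_def]
  split_ifs <;> omega

theorem segmentSwap_injective (h12 : q₁ < q₂) (h23 : q₂ < q₃) :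
    Function.Injective (segmentSwap q₁ q₂ q₃) := by
  intro s t h
  unfold segmentSwap at h
  split_ifs at h <;> omega

theorem segmentSwap_lt {N t : ℕ} (h3 : q₃ < N) (ht : t < N) : segmentSwap q₁ q₂ q₃ t < N := by
  unfold segmentSwap
  split_ifs <;> omega

end SegmentSwap

section GluedTour

variable {H : Type*} [Fintype H] [DecidableEq H] {γ : Perm H} {r a₁ a₂ a₃ : H}
  (hγ : γ.IsCycleOn (Finset.univ : Finset H))
include hγ

theorem Equiv.Perm.IsCycleOn.gpos_swap_mul_swap_apply (x : H) :
    gpos γ r ((swap a₁ a₂ * swap a₂ a₃) x) =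
      (swap (gpos γ r a₁) (gpos γ r a₂) * swap (gpos γ r a₂) (gpos γ r a₃)) (gpos γ r x) := by
  simp only [Equiv.Perm.mul_apply, hγ.gpos_injective.swap_apply]

variable (h12 : gpos γ r a₁ < gpos γ r a₂) (h23 : gpos γ r a₂ < gpos γ r a₃)
include h12 h23

theorem Equiv.Perm.IsCycleOn.gpos_glued_pow_apply {t : ℕ} (ht : t < Fintype.card H) :
    gpos γ r (((γ * (swap a₁ a₂ * swap a₂ a₃)) ^ t) r) =
      segmentSwap (gpos γ r a₁) (gpos γ r a₂) (gpos γ r a₃) t := by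
  induction t with
  | zero => simpa [segmentSwap_zero] using hγ.gpos_pow_apply (r := r) ht
  | succ t ih =>
    have hstep := segmentSwap_succ h12 h23 t
    rw [← ih (by omega), ← hγ.gpos_swap_mul_swap_apply] at hstep
    have hlt := segmentSwap_lt (q₁ := gpos γ r a₁) (q₂ := gpos γ r a₂)
      (hγ.gpos_lt_card (r := r) a₃) ht
    rw [pow_succ', Equiv.Perm.mul_apply, Equiv.Perm.mul_apply, hγ.gpos_apply (by omega), hstep]

theorem Equiv.Perm.IsCycleOn.gpos_glued_eq {x : H} {t : ℕ} (ht : t < Fintype.card H)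
    (hx : segmentSwap (gpos γ r a₁) (gpos γ r a₂) (gpos γ r a₃) t = gpos γ r x) :
    gpos (γ * (swap a₁ a₂ * swap a₂ a₃)) r x = t := by
  obtain rfl : ((γ * (swap a₁ a₂ * swap a₂ a₃)) ^ t) r = x :=
    hγ.gpos_injective (by rw [hγ.gpos_glued_pow_apply h12 h23 ht, hx])
  refine gpos_pow_apply_of_forall_ne fun j hj heq => hj.ne (segmentSwap_injective h12 h23 ?_)
  have := congrArg (gpos γ r) heq
  rwa [hγ.gpos_glued_pow_apply h12 h23 (hj.trans ht), hγ.gpos_glued_pow_apply h12 h23 ht] at this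

theorem Equiv.Perm.IsCycleOn.gpos_glued_left :
    gpos (γ * (swap a₁ a₂ * swap a₂ a₃)) r a₁ = gpos γ r a₁ :=
  hγ.gpos_glued_eq h12 h23 (hγ.gpos_lt_card a₁) (by unfold segmentSwap; split_ifs <;> omega)

theorem Equiv.Perm.IsCycleOn.gpos_glued_right :
    gpos (γ * (swap a₁ a₂ * swap a₂ a₃)) r a₃ = gpos γ r a₁ + (gpos γ r a₃ - gpos γ r a₂) :=
  hγ.gpos_glued_eq h12 h23 (by have := hγ.gpos_lt_card (r := r) a₃; omega)
    (by unfold segmentSwap; split_ifs <;> omega)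

theorem Equiv.Perm.IsCycleOn.gpos_glued_mid :
    gpos (γ * (swap a₁ a₂ * swap a₂ a₃)) r a₂ = gpos γ r a₃ :=
  hγ.gpos_glued_eq h12 h23 (hγ.gpos_lt_card a₃) (by unfold segmentSwap; split_ifs <;> omega)

theorem Equiv.Perm.IsCycleOn.gpos_glued_of_lt {x : H} (hx : gpos γ r a₃ < gpos γ r x) :
    gpos (γ * (swap a₁ a₂ * swap a₂ a₃)) r x = gpos γ r x :=
  hγ.gpos_glued_eq h12 h23 (hγ.gpos_lt_card x) (by unfold segmentSwap; split_ifs <;> omega)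

end GluedTour

section GluedVertex

variable {H : Type*} [Fintype H] [DecidableEq H] {σ : Perm H} {a₁ a₂ a₃ : H}

/-- Walking backwards along the `σ`-cycle of `x`, the product `σ * c` agrees with `σ` until it
returns to `x`. -/
theorem sameCycle_mul_of_apply_eq_self {c : Perm H} {x y : H}
    (hc : ∀ z, σ.SameCycle x z → z ≠ x → c z = z) (hy : σ.SameCycle x y) :
    (σ * c).SameCycle y x := by
  suffices h : ∀ m : ℕ, (σ * c).SameCycle ((σ⁻¹ ^ m) x) x by
    obtain ⟨m, -, rfl⟩ := (Equiv.Perm.sameCycle_inv.mpr hy).exists_pow_eq'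
    exact h m
  intro m
  induction m with
  | zero => exact .refl _ _
  | succ m ih =>
    by_cases hzx : (σ⁻¹ ^ (m + 1)) x = x
    · rw [hzx]
    have hz : σ.SameCycle x ((σ⁻¹ ^ (m + 1)) x) :=
      Equiv.Perm.sameCycle_inv.mp (Equiv.Perm.sameCycle_pow_right.mpr (.refl _ _))
    have hstep : (σ * c) ((σ⁻¹ ^ (m + 1)) x) = (σ⁻¹ ^ m) x := by
      rw [Equiv.Perm.mul_apply, hc _ hz hzx, pow_succ', Equiv.Perm.mul_apply,
        Equiv.Perm.coe_inv, Equiv.apply_symm_apply]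
    exact Equiv.Perm.sameCycle_apply_left.mp (hstep ▸ ih)

theorem sameCycle_glued (hd12 : ¬ σ.SameCycle a₁ a₂) (hd13 : ¬ σ.SameCycle a₁ a₃) :
    (σ * (swap a₁ a₂ * swap a₂ a₃)).SameCycle a₃ a₁ := by
  have hstep : (σ * (swap a₁ a₂ * swap a₂ a₃)) a₃ = σ a₁ := by
    simp only [Equiv.Perm.mul_apply, Equiv.swap_apply_right]
  refine Equiv.Perm.sameCycle_apply_left.mp (hstep ▸ sameCycle_mul_of_apply_eq_self ?_ ?_)
  · intro z hz hz₁
    have hz₂ : z ≠ a₂ := by rintro rfl; exact hd12 hz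
    have hz₃ : z ≠ a₃ := by rintro rfl; exact hd13 hz
    simp only [Equiv.Perm.mul_apply, Equiv.swap_apply_of_ne_of_ne hz₂ hz₃,
      Equiv.swap_apply_of_ne_of_ne hz₁ hz₂]
  · exact Equiv.Perm.sameCycle_apply_right.mpr (.refl _ _)

variable {γ : Perm H} {r : H} (hγ : γ.IsCycleOn (Finset.univ : Finset H))
  (h12 : gpos γ r a₁ < gpos γ r a₂) (h23 : gpos γ r a₂ < gpos γ r a₃)
include hγ h12 h23

theorem gpos_glued_lt_gpos_glued_inv (hd13 : ¬ σ.SameCycle a₁ a₃)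
    (hd23 : ¬ σ.SameCycle a₂ a₃) (hm3 : IsMinHE σ γ r a₃) :
    gpos (γ * (swap a₁ a₂ * swap a₂ a₃)) r a₃ <
      gpos (γ * (swap a₁ a₂ * swap a₂ a₃)) r ((σ * (swap a₁ a₂ * swap a₂ a₃))⁻¹ a₃) := by
  rw [hγ.gpos_glued_right h12 h23]
  by_cases hfix : σ a₃ = a₃
  · have h31 : a₃ ≠ a₁ := ne_of_apply_ne (gpos γ r) (h12.trans h23).ne'
    have h32 : a₃ ≠ a₂ := ne_of_apply_ne (gpos γ r) h23.ne'
    have hpre : (σ * (swap a₁ a₂ * swap a₂ a₃))⁻¹ a₃ = a₂ := by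
      rw [Equiv.Perm.inv_eq_iff_eq]
      simp only [Equiv.Perm.mul_apply, Equiv.swap_apply_left,
        Equiv.swap_apply_of_ne_of_ne h31 h32, hfix]
    rw [hpre, hγ.gpos_glued_mid h12 h23]
    omega
  · obtain ⟨y, hσy⟩ := σ.surjective a₃
    have hy : σ.SameCycle a₃ y := by
      rw [← hσy]
      exact Equiv.Perm.sameCycle_apply_left.mpr (.refl _ _)
    have hy₃ : y ≠ a₃ := by rintro rfl; exact hfix hσy
    have hy₁ : y ≠ a₁ := by rintro h; exact hd13 (h ▸ hy).symm
    have hy₂ : y ≠ a₂ := by rintro h; exact hd23 (h ▸ hy).symm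
    have hpre : (σ * (swap a₁ a₂ * swap a₂ a₃))⁻¹ a₃ = y := by
      rw [Equiv.Perm.inv_eq_iff_eq]
      simp only [Equiv.Perm.mul_apply, Equiv.swap_apply_of_ne_of_ne hy₂ hy₃,
        Equiv.swap_apply_of_ne_of_ne hy₁ hy₂, hσy]
    have hlt : gpos γ r a₃ < gpos γ r y :=
      (hm3 y hy).lt_of_ne fun h => hy₃ (hγ.gpos_injective h).symm
    rw [hpre, hγ.gpos_glued_of_lt h12 h23 hlt]
    omega

theorem not_isMinHE_glued (hd12 : ¬ σ.SameCycle a₁ a₂) (hd13 : ¬ σ.SameCycle a₁ a₃) :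
    ¬ IsMinHE (σ * (swap a₁ a₂ * swap a₂ a₃)) (γ * (swap a₁ a₂ * swap a₂ a₃)) r a₃ := by
  intro hmin
  have h := hmin a₁ (sameCycle_glued hd12 hd13)
  rw [hγ.gpos_glued_right h12 h23, hγ.gpos_glued_left h12 h23] at h
  omega

end GluedVertex

theorem glued_map_has_trisection_general {n : ℕ}
    (α σ : Equiv.Perm (Fin (2 * n)))
    (hcyc : (α * σ).IsCycle) (hsupp : (α * σ).support = Finset.univ)
    (r a₁ a₂ a₃ : Fin (2 * n))
    (hd12 : ¬ σ.SameCycle a₁ a₂) (hd13 : ¬ σ.SameCycle a₁ a₃)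
    (hd23 : ¬ σ.SameCycle a₂ a₃)
    (hm3 : IsMinHE σ (α * σ) r a₃)
    (ho12 : gpos (α * σ) r a₁ < gpos (α * σ) r a₂)
    (ho23 : gpos (α * σ) r a₂ < gpos (α * σ) r a₃) :
    IsTrisection (σ * (Equiv.swap a₁ a₂ * Equiv.swap a₂ a₃))
      (α * (σ * (Equiv.swap a₁ a₂ * Equiv.swap a₂ a₃))) r
      ((σ * (Equiv.swap a₁ a₂ * Equiv.swap a₂ a₃))⁻¹ a₃) := by
  have hγ : (α * σ).IsCycleOn (Finset.univ : Finset (Fin (2 * n))) := by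
    rw [Finset.coe_univ, ← Finset.coe_univ, ← hsupp, Equiv.Perm.coe_support_eq_set_support]
    exact hcyc.isCycleOn
  rw [← mul_assoc α σ]
  simp only [IsTrisection, Equiv.Perm.coe_inv, Equiv.apply_symm_apply]
  exact ⟨(gpos_glued_lt_gpos_glued_inv hγ ho12 ho23 hd13 hd23 hm3).le,
    not_isMinHE_glued hγ ho12 ho23 hd12 hd13⟩

/-- After gluing three vertices `v₁, v₂, v₃` (with minimum half-edges
`a₁ <_γ a₂ <_γ a₃`) of a unicellular map into a single vertex, the half-edge
`σ̄⁻¹ a₃` is a trisection of the resulting unicellular map.  The unicellular map is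
`(σ, α)` on `Fin (2n)` with `γ = α * σ` a single `2n`-cycle rooted at `r`; gluing
replaces the three `σ`-cycles by the single interleaved cycle, i.e. replaces `σ` by
`σ̄ = σ ∘ (a₁ a₂ a₃)`, with new boundary cycle `γ̄ = α * σ̄`. -/
theorem glued_map_has_trisection {n : ℕ}
    (α σ : Equiv.Perm (Fin (2 * n)))
    (hinv : α * α = 1) (hfpf : ∀ x, α x ≠ x)
    (hcyc : (α * σ).IsCycle) (hsupp : (α * σ).support = Finset.univ)
    (r a₁ a₂ a₃ : Fin (2 * n))
    (hd12 : ¬ σ.SameCycle a₁ a₂) (hd13 : ¬ σ.SameCycle a₁ a₃)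
    (hd23 : ¬ σ.SameCycle a₂ a₃)
    (hm1 : IsMinHE σ (α * σ) r a₁) (hm2 : IsMinHE σ (α * σ) r a₂)
    (hm3 : IsMinHE σ (α * σ) r a₃)
    (ho12 : gpos (α * σ) r a₁ < gpos (α * σ) r a₂)
    (ho23 : gpos (α * σ) r a₂ < gpos (α * σ) r a₃) :
    IsTrisection (σ * (Equiv.swap a₁ a₂ * Equiv.swap a₂ a₃))
      (α * (σ * (Equiv.swap a₁ a₂ * Equiv.swap a₂ a₃))) r
      ((σ * (Equiv.swap a₁ a₂ * Equiv.swap a₂ a₃))⁻¹ a₃) :=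
  glued_map_has_trisection_general α σ hcyc hsupp r a₁ a₂ a₃ hd12 hd13 hd23 hm3 ho12 ho23
end
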